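/- arXiv:1901.01212 — 2 statements merged into one kernel-verified Lean document; each statement's English description precedes it below -/
import Mathlib

section
/- Let M be an m × n matrix with entries in Z₂ (n, m ≥ 1) such that every column of M contains at least one 1. Then there exists a vector v in the row space of M (i.e., a Z₂-linear combination of the rows of M) such that strictly more than n/2 of the entries of v are equal to 1. -/
/-!
For each column `j`, the functional `c ↦ (c ᵥ* M) j` on `(ZMod 2)ᵐ` is onto, because column `j`
contains a `1`; so it takes the value `1` on exactly half of the `2 ^ m` vectors `c`. Double counting
then gives that the weights of the vectors `c ᵥ* M` add up to `n * 2 ^ (m - 1)`, i.e. average `n / 2`.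
The vector `c = 0` has weight `0`, so some other `c` has weight strictly above `n / 2`.
-/

open Finset Matrix

lemma AddMonoidHom.two_mul_card_fiber_one {G : Type*} [AddGroup G] [Fintype G]
    (f : G →+ ZMod 2) (hf : Function.Surjective f) :
    2 * #{g | f g = 1} = Fintype.card G := by
  have hfiber : #{g | f g = 1} = #{g | f g = 0} :=
    AddMonoidHom.card_fiber_eq_of_mem_range f (hf 1) (hf 0)
  have hzero : ∀ x : ZMod 2, x = 0 ↔ ¬x = 1 := by decide
  simp only [hzero] at hfiber
  rw [two_mul]
  nth_rw 2 [hfiber]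
  exact card_filter_add_card_filter_not _

lemma two_mul_card_vecMul_apply_eq_one {ι κ : Type*} [Fintype ι] [DecidableEq ι]
    (M : Matrix ι κ (ZMod 2)) {i : ι} {j : κ} (hij : M i j = 1) :
    2 * #{c : ι → ZMod 2 | (c ᵥ* M) j = 1} = 2 ^ Fintype.card ι := by
  let f : (ι → ZMod 2) →+ ZMod 2 := (LinearMap.proj j ∘ₗ vecMulLinear M).toAddMonoidHom
  have hf : Function.Surjective f := fun x => ⟨Pi.single i x, by simp [f, hij]⟩
  have hcard := f.two_mul_card_fiber_one hf
  rw [Fintype.card_fun, ZMod.card] at hcard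
  exact hcard

lemma sum_two_mul_card_vecMul_eq_one {ι κ : Type*} [Fintype ι] [DecidableEq ι] [Fintype κ]
    (M : Matrix ι κ (ZMod 2)) (hM : ∀ j, ∃ i, M i j = 1) :
    ∑ c : ι → ZMod 2, 2 * #{j | (c ᵥ* M) j = 1} = Fintype.card κ * 2 ^ Fintype.card ι := by
  have hcount := sum_card_bipartiteAbove_eq_sum_card_bipartiteBelow
    (s := (univ : Finset (ι → ZMod 2))) (t := (univ : Finset κ)) (fun c j => (c ᵥ* M) j = 1)
  simp only [bipartiteAbove, bipartiteBelow] at hcount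
  have hfiber (j : κ) : 2 * #{c : ι → ZMod 2 | (c ᵥ* M) j = 1} = 2 ^ Fintype.card ι :=
    let ⟨_, hij⟩ := hM j
    two_mul_card_vecMul_apply_eq_one M hij
  rw [← mul_sum, hcount, mul_sum, sum_congr rfl fun j _ => hfiber j, sum_const, card_univ,
    smul_eq_mul]

lemma exists_lt_two_mul_card_vecMul_eq_one {ι κ : Type*} [Fintype ι] [DecidableEq ι]
    [Fintype κ] [Nonempty κ] (M : Matrix ι κ (ZMod 2)) (hM : ∀ j, ∃ i, M i j = 1) :
    ∃ c : ι → ZMod 2, Fintype.card κ < 2 * #{j | (c ᵥ* M) j = 1} := by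
  set w : (ι → ZMod 2) → ℕ := fun c => 2 * #{j | (c ᵥ* M) j = 1}
  have hw0 : w 0 = 0 := by simp [w]
  have hpos : 0 < Fintype.card κ := Fintype.card_pos
  have hlt : ∑ _c ∈ univ.erase (0 : ι → ZMod 2), Fintype.card κ < ∑ c ∈ univ.erase 0, w c := by
    rw [sum_erase _ hw0, sum_two_mul_card_vecMul_eq_one M hM, sum_const,
      card_erase_of_mem (mem_univ _), card_univ, Fintype.card_fun, ZMod.card, smul_eq_mul,
      Nat.sub_one_mul, mul_comm]
    exact Nat.sub_lt (Nat.mul_pos hpos (by positivity)) hpos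
  obtain ⟨c, -, hc⟩ := exists_lt_of_sum_lt hlt
  exact ⟨c, hc⟩

theorem stmt_0_general (m n : ℕ) (hn : 1 ≤ n)
    (M : Fin m → Fin n → ZMod 2)
    (hcol : ∀ j : Fin n, ∃ i : Fin m, M i j = 1) :
    ∃ c : Fin m → ZMod 2,
      2 * (Finset.univ.filter (fun j : Fin n => (∑ i, c i * M i j) = 1)).card > n := by
  have : NeZero n := ⟨by omega⟩
  obtain ⟨c, hc⟩ := exists_lt_two_mul_card_vecMul_eq_one (Matrix.of M) hcol
  rw [Fintype.card_fin] at hc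
  exact ⟨c, hc⟩

theorem stmt_0 (m n : ℕ) (hm : 1 ≤ m) (hn : 1 ≤ n)
    (M : Fin m → Fin n → ZMod 2)
    (hcol : ∀ j : Fin n, ∃ i : Fin m, M i j = 1) :
    ∃ c : Fin m → ZMod 2,
      2 * (Finset.univ.filter (fun j : Fin n => (∑ i, c i * M i j) = 1)).card > n :=
  stmt_0_general m n hn M hcol
end

section
/- Let n ∈ ℕ with n ≥ 1, and let M be an n × n matrix over Z₂ with M_{ii} = 1 for all i. Then there exists a nonempty set of rows of M whose Z₂-sum has strictly more than n/2 entries equal to 1. -/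
/-!
If column `j` has a `1` in row `a`, toggling `a ∈ T` flips the `j`-th entry of `∑ i ∈ T, M i`,
so exactly half of the `2 ^ n` row subsets `T` give a `1` in column `j`. Summing over the columns,
the weights of the `2 ^ n` subset sums average `n / 2`; since the empty sum has weight `0 < n / 2`,
some nonempty subset has weight `> n / 2`.
-/

open Finset
open scoped symmDiff

theorem Finset.sum_symmDiff_singleton {ι R : Type*} [DecidableEq ι] [Ring R] [CharP R 2]
    (s : Finset ι) (f : ι → R) (a : ι) :
    ∑ i ∈ s ∆ {a}, f i = ∑ i ∈ s, f i + f a := by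
  by_cases ha : a ∈ s
  · rw [symmDiff_of_ge (singleton_subset_iff.2 ha), sdiff_singleton_eq_erase,
      ← add_sum_erase s f ha, add_comm (f a), add_assoc, CharTwo.add_self_eq_zero, add_zero]
  · have hdisj : Disjoint s {a} := disjoint_singleton_right.2 ha
    rw [symmDiff_eq_union hdisj, sum_union hdisj, sum_singleton]

theorem two_mul_card_filter_of_involutive {α : Type*} [Fintype α] (p : α → Prop) [DecidablePred p]
    {σ : α → α} (hσ : Function.Involutive σ) (hp : ∀ a, p (σ a) ↔ ¬ p a) :
    2 * #{a | p a} = Fintype.card α := by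
  have hswap : #{a | p a} = #{a | ¬ p a} :=
    card_nbij' σ σ (fun a ha => by simp_all) (fun a ha => by simp_all)
      (fun a _ => hσ a) (fun a _ => hσ a)
  rw [two_mul]
  nth_rw 2 [hswap]
  rw [card_filter_add_card_filter_not, card_univ]

theorem two_mul_card_finset_sum_eq_one {ι : Type*} [Fintype ι] [DecidableEq ι]
    (f : ι → ZMod 2) {a : ι} (ha : f a = 1) :
    2 * #{s : Finset ι | ∑ i ∈ s, f i = 1} = 2 ^ Fintype.card ι := by
  rw [two_mul_card_filter_of_involutive _ (symmDiff_left_involutive {a}),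
    Fintype.card_finset]
  intro s
  rw [sum_symmDiff_singleton, ha]
  generalize ∑ i ∈ s, f i = x
  revert x
  decide

theorem two_mul_sum_card_filter_sum_eq_one {ι κ : Type*} [Fintype ι] [DecidableEq ι] [Fintype κ]
    (M : ι → κ → ZMod 2) (hM : ∀ j, ∃ i, M i j = 1) :
    2 * ∑ s : Finset ι, #{j | ∑ i ∈ s, M i j = 1} = Fintype.card κ * 2 ^ Fintype.card ι := by
  calc 2 * ∑ s : Finset ι, #{j | ∑ i ∈ s, M i j = 1}
      = ∑ j, 2 * #{s : Finset ι | ∑ i ∈ s, M i j = 1} := by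
        simp only [card_filter]
        rw [sum_comm, mul_sum]
    _ = ∑ _j : κ, 2 ^ Fintype.card ι := sum_congr rfl fun j _ =>
        let ⟨_, hi⟩ := hM j; two_mul_card_finset_sum_eq_one _ hi
    _ = Fintype.card κ * 2 ^ Fintype.card ι := by simp

theorem exists_nonempty_two_mul_card_filter_sum_eq_one_gt {ι κ : Type*} [Fintype ι] [DecidableEq ι]
    [Fintype κ] [Nonempty κ] (M : ι → κ → ZMod 2) (hM : ∀ j, ∃ i, M i j = 1) :
    ∃ s : Finset ι, s.Nonempty ∧ Fintype.card κ < 2 * #{j | ∑ i ∈ s, M i j = 1} := by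
  by_contra! hle
  have hsum : ∑ s ∈ univ.erase ∅, 2 * #{j | ∑ i ∈ s, M i j = 1}
      ≤ ∑ s ∈ univ.erase (∅ : Finset ι), Fintype.card κ :=
    sum_le_sum fun s hs => hle s (nonempty_iff_ne_empty.2 (ne_of_mem_erase hs))
  rw [← mul_sum, sum_erase _ (by simp), two_mul_sum_card_filter_sum_eq_one M hM, sum_const,
    card_erase_of_mem (mem_univ _), card_univ, Fintype.card_finset, smul_eq_mul, mul_comm] at hsum
  exact hsum.not_gt (Nat.mul_lt_mul_of_pos_right (Nat.sub_lt (Nat.two_pow_pos _) one_pos)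
    Fintype.card_pos)

theorem stmt_6 (n : ℕ) (hn : 1 ≤ n) (M : Fin n → Fin n → ZMod 2)
    (hdiag : ∀ i, M i i = 1) :
    ∃ T : Finset (Fin n), T.Nonempty ∧
      2 * (Finset.univ.filter (fun j : Fin n => (∑ i ∈ T, M i j) = 1)).card > n := by
  have : Nonempty (Fin n) := Fin.pos_iff_nonempty.1 hn
  simpa using exists_nonempty_two_mul_card_filter_sum_eq_one_gt M fun j => ⟨j, hdiag j⟩
end
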